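/- arXiv:2201.01497 — 3 statements merged into one kernel-verified Lean document; each statement's English description precedes it below -/
import Mathlib

section
/- Let C be a 2-quasi-cyclic code with Goursat data (C1, C2, C12, g). Then C is a dihedral code (i.e., C is invariant under the map (a, a') ↦ (ā', ā)) if and only if C̄1 = C2, C̄12 = C12, and ḡ·g = e_{C12}. -/
noncomputable section

/-- The cyclic group of order `n`, written multiplicatively. -/
abbrev Zn (n : ℕ) := Multiplicative (ZMod n)

/-- The group algebra `FH` of the cyclic group of order `n` over `F`. -/
abbrev FH (F : Type*) [Field F] (n : ℕ) := MonoidAlgebra F (Zn n)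

variable {F : Type*} [Field F] [Fintype F] {n : ℕ} [NeZero n]

/-- The "bar" map of the group algebra, induced by `x ↦ x⁻¹`. -/
def bar (a : FH F n) : FH F n := MonoidAlgebra.ofCoeff (Finsupp.equivMapDomain (Equiv.inv (Zn n)) a.coeff)

/-- The inner product on `FH`: `⟨a, b⟩ = ∑ a_g * b_g`. -/
def innerFH (a b : FH F n) : F := ∑ g : Zn n, a.coeff g * b.coeff g

/-- The inner product on `FH × FH`. -/
def innerFH2 (a b : FH F n × FH F n) : F := innerFH a.1 b.1 + innerFH a.2 b.2

/-- `Ĉ₁₂ = {(c, c·g) : c ∈ C12}` as an `FH`-submodule of `FH × FH`. -/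
def hatSub (C12 : Ideal (FH F n)) (g : FH F n) : Submodule (FH F n) (FH F n × FH F n) :=
  Submodule.map (LinearMap.prod LinearMap.id (LinearMap.mulRight (FH F n) g)) C12

/-- A 2-quasi-cyclic code (an `FH`-submodule of `FH × FH`) is self-dual if it
equals its orthogonal complement. -/
def IsSelfDual (C : Submodule (FH F n) (FH F n × FH F n)) : Prop :=
  (C : Set (FH F n × FH F n)) = {v | ∀ c ∈ C, innerFH2 v c = 0}

/-- A 2-quasi-cyclic code is a dihedral code iff it is invariant under
`(a, a') ↦ (ā', ā)` (left multiplication by `y` in the dihedral group algebra). -/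
def IsDihedral (C : Submodule (FH F n) (FH F n × FH F n)) : Prop :=
  ∀ p ∈ C, (bar p.2, bar p.1) ∈ C

/-- A 2-quasi-cyclic code is a consta-dihedral code iff it is invariant under
`(a, a') ↦ (−ā', ā)` (left multiplication by `ỹ` in the consta-dihedral algebra). -/
def IsConstaDihedral (C : Submodule (FH F n) (FH F n × FH F n)) : Prop :=
  ∀ p ∈ C, (-(bar p.2), bar p.1) ∈ C

/-!
Since `C1 ∩ C12 = 0 = C2 ∩ C12` and `g` is a unit of `C12`, a pair `(a, 0)` lies in `C` only for
`a ∈ C1`, a pair `(0, b)` only for `b ∈ C2`, and a pair in `C12 × C12` only if it has the form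
`(c, c g)`. Invariance under `(a, a') ↦ (ā', ā)` therefore gives `C̄1 = C2` at once. The idempotent
`e` annihilates `C1` and `C2`; writing `ē = c2 + d` with `c2 ∈ C2`, `d ∈ C12` and multiplying by
`e` twice, once before and once after applying the bar map, shows `ē = e`, hence `C̄12 = C12`.
Finally `(e, g) ∈ C` is mapped to `(ḡ, e) ∈ C12 × C12`, so `e = ḡ g`. Conversely, under the three
conditions the bar-swap of `(c1 + c, c2 + c g)` is `(c̄2 + c', c̄1 + c' g)` with `c' = c̄ ḡ ∈ C12`.
-/

section Goursat

variable {R : Type*} [CommRing R]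

def goursatCode (C1 C2 C12 : Ideal R) (g : R) : Submodule R (R × R) :=
  Submodule.prod C1 C2 ⊔ Submodule.map (LinearMap.id.prod (LinearMap.mulRight R g)) C12

def SwapInvariant (σ : R → R) (C : Submodule R (R × R)) : Prop :=
  ∀ p ∈ C, (σ p.2, σ p.1) ∈ C

variable {C1 C2 C12 : Ideal R} {e g h : R}

theorem mem_goursatCode {p : R × R} :
    p ∈ goursatCode C1 C2 C12 g ↔
      ∃ c1 ∈ C1, ∃ c2 ∈ C2, ∃ c ∈ C12, p = (c1 + c, c2 + c * g) := by
  simp only [goursatCode, Submodule.mem_sup, Submodule.mem_prod, Submodule.mem_map,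
    LinearMap.prod_apply]
  constructor
  · rintro ⟨y, ⟨hy1, hy2⟩, _, ⟨c, hc, rfl⟩, rfl⟩
    exact ⟨y.1, hy1, y.2, hy2, c, hc, rfl⟩
  · rintro ⟨c1, hc1, c2, hc2, c, hc, rfl⟩
    exact ⟨(c1, c2), ⟨hc1, hc2⟩, _, ⟨c, hc, rfl⟩, rfl⟩

theorem Ideal.mul_eq_zero_of_inf_eq_bot {I J : Ideal R} (hIJ : I ⊓ J = ⊥) {a b : R}
    (ha : a ∈ I) (hb : b ∈ J) : a * b = 0 := by
  simpa [hIJ] using Ideal.mul_le_inf (Ideal.mul_mem_mul ha hb)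

theorem Ideal.eq_zero_of_mem_of_inf_eq_bot {I J : Ideal R} (hIJ : I ⊓ J = ⊥) {a : R}
    (haI : a ∈ I) (haJ : a ∈ J) : a = 0 :=
  Submodule.disjoint_def.mp (disjoint_iff.mpr hIJ) a haI haJ

theorem fst_mem_of_mk_zero_mem_goursatCode (h212 : C2 ⊓ C12 = ⊥) (hid : ∀ c ∈ C12, e * c = c)
    (hgh : g * h = e) {a : R} (ha : (a, 0) ∈ goursatCode C1 C2 C12 g) : a ∈ C1 := by
  obtain ⟨c1, hc1, c2, hc2, c, hc, hp⟩ := mem_goursatCode.mp ha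
  simp only [Prod.ext_iff] at hp
  have hc2 : c2 = 0 := Ideal.eq_zero_of_mem_of_inf_eq_bot h212 hc2 <| by
    rw [eq_neg_of_add_eq_zero_left hp.2.symm]
    exact neg_mem (C12.mul_mem_right g hc)
  have hc : c = 0 :=
    calc c = e * c := (hid c hc).symm
      _ = h * (c2 + c * g) := by rw [← hgh, hc2]; ring
      _ = 0 := by rw [← hp.2, mul_zero]
  simpa [hp.1, hc] using hc1

theorem snd_mem_of_zero_mk_mem_goursatCode (h112 : C1 ⊓ C12 = ⊥) {b : R}
    (hb : (0, b) ∈ goursatCode C1 C2 C12 g) : b ∈ C2 := by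
  obtain ⟨c1, hc1, c2, hc2, c, hc, hp⟩ := mem_goursatCode.mp hb
  simp only [Prod.ext_iff] at hp
  have hc1 : c1 = 0 := Ideal.eq_zero_of_mem_of_inf_eq_bot h112 hc1 <| by
    rw [eq_neg_of_add_eq_zero_left hp.1.symm]; exact neg_mem hc
  have hc : c = 0 := by simpa [hc1] using hp.1.symm
  simpa [hp.2, hc] using hc2

theorem snd_eq_fst_mul_of_mem_goursatCode (h112 : C1 ⊓ C12 = ⊥) (h212 : C2 ⊓ C12 = ⊥)
    {a b : R} (hab : (a, b) ∈ goursatCode C1 C2 C12 g) (ha : a ∈ C12) (hb : b ∈ C12) :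
    b = a * g := by
  obtain ⟨c1, hc1, c2, hc2, c, hc, hp⟩ := mem_goursatCode.mp hab
  simp only [Prod.ext_iff] at hp
  have hc1 : c1 = 0 := Ideal.eq_zero_of_mem_of_inf_eq_bot h112 hc1 <| by
    rw [eq_sub_of_add_eq hp.1.symm]; exact sub_mem ha hc
  have hc2 : c2 = 0 := Ideal.eq_zero_of_mem_of_inf_eq_bot h212 hc2 <| by
    rw [eq_sub_of_add_eq hp.2.symm]; exact sub_mem hb (C12.mul_mem_right g hc)
  rw [hp.1, hp.2, hc1, hc2, zero_add, zero_add]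

theorem snd_mem_sup_of_mem_goursatCode {p : R × R} (hp : p ∈ goursatCode C1 C2 C12 g) :
    p.2 ∈ C2 ⊔ C12 := by
  obtain ⟨c1, hc1, c2, hc2, c, hc, rfl⟩ := mem_goursatCode.mp hp
  exact Submodule.add_mem_sup hc2 (C12.mul_mem_right g hc)

theorem Function.Involutive.image_eq_of_mapsTo {α : Type*} {f : α → α}
    (hf : Function.Involutive f) {s t : Set α} (hst : Set.MapsTo f s t)
    (hts : Set.MapsTo f t s) : f '' s = t :=
  (Set.RightInvOn.surjOn (fun x _ => hf x) hts).image_eq_of_mapsTo hst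

theorem Function.Involutive.mapsTo_of_image_eq {α : Type*} {f : α → α}
    (hf : Function.Involutive f) {s t : Set α} (h : f '' s = t) : Set.MapsTo f t s :=
  fun _ hb => (Set.mem_image_iff_of_inverse hf.leftInverse hf.rightInverse).mp (h ▸ hb)

section Involution

variable {σ : R →+* R}

theorem image_eq_of_swapInvariant (hσ : Function.Involutive σ) (h112 : C1 ⊓ C12 = ⊥)
    (h212 : C2 ⊓ C12 = ⊥) (hid : ∀ c ∈ C12, e * c = c) (hgh : g * h = e)
    (hC : SwapInvariant σ (goursatCode C1 C2 C12 g)) : σ '' C1 = C2 := by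
  refine hσ.image_eq_of_mapsTo (fun a ha => ?_) (fun b hb => ?_)
  · have := hC (a, 0) (mem_goursatCode.mpr ⟨a, ha, 0, zero_mem _, 0, zero_mem _, by simp⟩)
    exact snd_mem_of_zero_mk_mem_goursatCode h112 (by simpa using this)
  · have := hC (0, b) (mem_goursatCode.mpr ⟨0, zero_mem _, b, hb, 0, zero_mem _, by simp⟩)
    exact fst_mem_of_mk_zero_mem_goursatCode h212 hid hgh (by simpa using this)

theorem map_eq_self_of_mem_sup (hσ : Function.Involutive σ) (hσC2 : ∀ a ∈ C2, σ a ∈ C1)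
    (h112 : C1 ⊓ C12 = ⊥) (h212 : C2 ⊓ C12 = ⊥) (heC : e ∈ C12)
    (hid : ∀ c ∈ C12, e * c = c) (hσe : σ e ∈ C2 ⊔ C12) : σ e = e := by
  obtain ⟨c2, hc2, d, hd, hsum⟩ := Submodule.mem_sup.mp hσe
  have hee : e * e = e := hid e heC
  have he_c2 : e * c2 = 0 := by
    rw [mul_comm]; exact Ideal.mul_eq_zero_of_inf_eq_bot h212 hc2 heC
  have he_σc2 : e * σ c2 = 0 := by
    rw [mul_comm]; exact Ideal.mul_eq_zero_of_inf_eq_bot h112 (hσC2 c2 hc2) heC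
  have hσe_eq : σ e = c2 + e * σ e := by rw [← hsum, mul_add, he_c2, hid d hd, zero_add]
  have he_eq : e = e * σ e :=
    calc e = e * σ (σ e) := by rw [hσ e, hee]
      _ = e * σ c2 + e * σ e * e := by
        conv_lhs => rw [hσe_eq]
        rw [map_add, map_mul, hσ e]; ring
      _ = e * σ e := by rw [he_σc2, zero_add, mul_right_comm, hee]
  calc σ e = σ (e * σ e) := by rw [← he_eq]
    _ = e := by rw [map_mul, hσ e, mul_comm, ← he_eq]

theorem swapInvariant_goursatCode_iff (σ : R →+* R) (hσ : Function.Involutive σ)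
    (h112 : C1 ⊓ C12 = ⊥) (h212 : C2 ⊓ C12 = ⊥) (heC : e ∈ C12)
    (hid : ∀ c ∈ C12, e * c = c) (hg : g ∈ C12) (hgh : g * h = e) :
    SwapInvariant σ (goursatCode C1 C2 C12 g) ↔
      σ '' C1 = C2 ∧ σ '' C12 = C12 ∧ σ g * g = e := by
  constructor
  · intro hC
    have hC1 := image_eq_of_swapInvariant hσ h112 h212 hid hgh hC
    have heg : (e, g) ∈ goursatCode C1 C2 C12 g :=
      mem_goursatCode.mpr ⟨0, zero_mem _, 0, zero_mem _, e, heC, by simp [hid g hg]⟩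
    have hσe : σ e = e :=
      map_eq_self_of_mem_sup hσ (hσ.mapsTo_of_image_eq hC1) h112 h212 heC hid
        (snd_mem_sup_of_mem_goursatCode (hC _ heg))
    have hC12 : Set.MapsTo σ C12 C12 := fun c hc => by
      rw [← hid c hc, map_mul, hσe]; exact C12.mul_mem_right _ heC
    refine ⟨hC1, hσ.image_eq_of_mapsTo hC12 hC12, ?_⟩
    have := hC _ heg
    rw [hσe] at this
    exact (snd_eq_fst_mul_of_mem_goursatCode h112 h212 this (hC12 hg) heC).symm
  · rintro ⟨hC1, hC12, hσg⟩ p hp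
    obtain ⟨c1, hc1, c2, hc2, c, hc, rfl⟩ := mem_goursatCode.mp hp
    have hσc : σ c ∈ C12 := hC12.subset ⟨c, hc, rfl⟩
    refine mem_goursatCode.mpr ⟨σ c2, hσ.mapsTo_of_image_eq hC1 hc2, σ c1,
      hC1.subset ⟨c1, hc1, rfl⟩, σ c * σ g, C12.mul_mem_right _ hσc, ?_⟩
    have : σ c * σ g * g = σ c := by rw [mul_assoc, hσg, mul_comm, hid _ hσc]
    simp only [map_add, map_mul, this]

end Involution

end Goursat

theorem bar_involutive {F : Type*} [Field F] {n : ℕ} :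
    Function.Involutive (bar : FH F n → FH F n) := fun a => by
  ext x; simp [bar, Finsupp.equivMapDomain_apply]

theorem coe_domCongr_inv {F : Type*} [Field F] {n : ℕ} :
    ⇑(MonoidAlgebra.domCongr F F (MulEquiv.inv (Zn n))) = (bar : FH F n → FH F n) := by
  funext a; ext x; simp [bar, Finsupp.equivMapDomain_apply]

theorem dihedral_iff_general (F : Type*) [Field F] (n : ℕ)
    (C : Submodule (FH F n) (FH F n × FH F n))
    (C1 C2 C12 : Ideal (FH F n)) (e g h : FH F n)
    (h112 : C1 ⊓ C12 = ⊥) (h212 : C2 ⊓ C12 = ⊥)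
    (heC : e ∈ C12) (hid : ∀ c ∈ C12, e * c = c)
    (hg : g ∈ C12) (hgh : g * h = e)
    (hC : C = Submodule.prod C1 C2 ⊔ hatSub C12 g) :
    IsDihedral C ↔
      (bar '' (C1 : Set (FH F n)) = (C2 : Set (FH F n)) ∧
       bar '' (C12 : Set (FH F n)) = (C12 : Set (FH F n)) ∧
       bar g * g = e) := by
  subst hC
  have key := swapInvariant_goursatCode_iff
    (MonoidAlgebra.domCongr F F (MulEquiv.inv (Zn n)) : FH F n →+* FH F n)
    (by simpa [coe_domCongr_inv] using bar_involutive) h112 h212 heC hid hg hgh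
  rw [RingHom.coe_coe, coe_domCongr_inv] at key
  exact key

/-- A 2-quasi-cyclic code `C` with Goursat data `(C1, C2, C12, g)` is a dihedral
code iff `C̄1 = C2`, `C̄12 = C12`, and `ḡ·g = e_{C12}`. -/
theorem dihedral_iff (F : Type*) [Field F] [Fintype F] (n : ℕ) [NeZero n]
    (hn : 1 < n) (hcop : Nat.Coprime n (Fintype.card F))
    (C : Submodule (FH F n) (FH F n × FH F n))
    (C1 C2 C12 : Ideal (FH F n)) (e g h : FH F n)
    (h112 : C1 ⊓ C12 = ⊥) (h212 : C2 ⊓ C12 = ⊥)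
    (heC : e ∈ C12) (hspan : C12 = Ideal.span {e}) (hid : ∀ c ∈ C12, e * c = c)
    (hg : g ∈ C12) (hh : h ∈ C12) (hgh : g * h = e)
    (hC : C = Submodule.prod C1 C2 ⊔ hatSub C12 g) :
    IsDihedral C ↔
      (bar '' (C1 : Set (FH F n)) = (C2 : Set (FH F n)) ∧
       bar '' (C12 : Set (FH F n)) = (C12 : Set (FH F n)) ∧
       bar g * g = e) :=
  dihedral_iff_general F n C C1 C2 C12 e g h h112 h212 heC hid hg hgh hC
end
end

section
/- Suppose char F = 2. Then every principal self-dual 2-quasi-cyclic code of length 2n over F is a dihedral code. In particular, every self-dual 2-quasi-cyclic code of the form FH·(1, a) with a ∈ FH (i.e., every self-dual double circulant code) is a dihedral code. -/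
/-!
Since `⟨ā, c⟩` is the coefficient of `1` in `a * c`, for `p, c ∈ FH × FH` we get
`⟨(p̄₂, p̄₁), c⟩ = (p₂ c₁ + p₁ c₂)₁`. If `p` and `c` lie in a principal code `FH·w`, then
`p₂ c₁ = p₁ c₂`, so in characteristic two this inner product vanishes, and self-duality puts
`(p̄₂, p̄₁)` back into the code.
-/

noncomputable section

variable {F : Type*} [Field F] [Fintype F] {n : ℕ} [NeZero n]

theorem MonoidAlgebra.coeff_mul_one_eq_sum {R G : Type*} [Semiring R] [Group G] [Fintype G]
    (x y : MonoidAlgebra R G) : (x * y).coeff 1 = ∑ g : G, x.coeff g * y.coeff g⁻¹ := by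
  rw [MonoidAlgebra.coeff_mul_apply_left, Finsupp.sum_fintype _ _ (fun _ => zero_mul _)]
  simp only [mul_one]

theorem snd_mul_fst_eq_fst_mul_snd_of_mem_span_singleton {R : Type*} [CommRing R]
    {w p c : R × R} (hp : p ∈ Submodule.span R {w}) (hc : c ∈ Submodule.span R {w}) :
    p.2 * c.1 = p.1 * c.2 := by
  obtain ⟨r, rfl⟩ := Submodule.mem_span_singleton.mp hp
  obtain ⟨s, rfl⟩ := Submodule.mem_span_singleton.mp hc
  simp only [Prod.smul_fst, Prod.smul_snd, smul_eq_mul]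
  ring

section

variable {F : Type*} [Field F] {n : ℕ}

theorem bar_coeff (a : FH F n) (g : Zn n) : (bar a).coeff g = a.coeff g⁻¹ := by
  simp [bar, MonoidAlgebra.coeff_ofCoeff, Finsupp.equivMapDomain_apply]

variable [NeZero n]

theorem innerFH_bar_left (b c : FH F n) : innerFH (bar b) c = (b * c).coeff 1 := by
  rw [MonoidAlgebra.coeff_mul_one_eq_sum, innerFH]
  exact Fintype.sum_equiv (Equiv.inv (Zn n)) _ _ fun g => by simp [bar_coeff]

theorem innerFH2_swap_bar (p c : FH F n × FH F n) :
    innerFH2 (bar p.2, bar p.1) c = (p.2 * c.1).coeff 1 + (p.1 * c.2).coeff 1 := by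
  simp only [innerFH2, innerFH_bar_left]

theorem IsSelfDual.mem_of_forall_innerFH2_eq_zero {C : Submodule (FH F n) (FH F n × FH F n)}
    (hC : IsSelfDual C) {v : FH F n × FH F n} (hv : ∀ c ∈ C, innerFH2 v c = 0) : v ∈ C := by
  rw [← SetLike.mem_coe, hC]
  exact hv

theorem isDihedral_span_singleton_of_isSelfDual [CharP F 2] {w : FH F n × FH F n}
    (hC : IsSelfDual (Submodule.span (FH F n) {w})) : IsDihedral (Submodule.span (FH F n) {w}) :=
  fun p hp => hC.mem_of_forall_innerFH2_eq_zero fun c hc => by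
    rw [innerFH2_swap_bar, snd_mul_fst_eq_fst_mul_snd_of_mem_span_singleton hp hc,
      CharTwo.add_self_eq_zero]

end

theorem principal_self_dual_is_dihedral_char_two_general (F : Type*) [Field F]
    (n : ℕ) [NeZero n]
    (hchar : ringChar F = 2) :
    (∀ C : Submodule (FH F n) (FH F n × FH F n), IsSelfDual C →
      (∃ v : FH F n × FH F n, C = Submodule.span (FH F n) {v}) → IsDihedral C) ∧
    (∀ (a : FH F n) (C : Submodule (FH F n) (FH F n × FH F n)), IsSelfDual C →
      C = Submodule.span (FH F n) {((1 : FH F n), a)} → IsDihedral C) := by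
  have : CharP F 2 := ringChar.of_eq hchar
  refine ⟨?_, ?_⟩
  · rintro C hC ⟨v, rfl⟩
    exact isDihedral_span_singleton_of_isSelfDual hC
  · rintro a C hC rfl
    exact isDihedral_span_singleton_of_isSelfDual hC

/-- (char F = 2.) Every principal self-dual 2-quasi-cyclic code is a dihedral code;
in particular every self-dual double circulant code `FH·(1, a)` is dihedral. -/
theorem principal_self_dual_is_dihedral_char_two (F : Type*) [Field F] [Fintype F]
    (n : ℕ) [NeZero n]
    (hn : 1 < n) (hcop : Nat.Coprime n (Fintype.card F))
    (hchar : ringChar F = 2) :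
    (∀ C : Submodule (FH F n) (FH F n × FH F n), IsSelfDual C →
      (∃ v : FH F n × FH F n, C = Submodule.span (FH F n) {v}) → IsDihedral C) ∧
    (∀ (a : FH F n) (C : Submodule (FH F n) (FH F n × FH F n)), IsSelfDual C →
      C = Submodule.span (FH F n) {((1 : FH F n), a)} → IsDihedral C) :=
  principal_self_dual_is_dihedral_char_two_general F n hchar
end
end

section
/- Suppose char F is odd and 4 divides q − 1 (so that −1 is a square in F and self-dual 2-quasi-cyclic codes over F exist). Then every self-dual 2-quasi-cyclic code of length 2n over F is a consta-dihedral code if and only if −1 belongs to the cyclic subgroup of (ℤ/nℤ)^× generated by q. -/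
/-!
If `q ^ k ≡ -1 (mod n)`, the bar map of `FH` is the Frobenius power `a ↦ a ^ q ^ k`. For `u, v` in a
self-dual code, `d = u₁v₂ - u₂v₁` satisfies `d * d̄ = 0` by a Lagrange identity for the hermitian
form `u₁v̄₁ + u₂v̄₂`, which vanishes on the code; so `d` is nilpotent, hence zero because `FH` is
semisimple (Maschke). And `d̄` is the hermitian pairing of `(-ū₂, ū₁)` with `v`.

If `-1 ∉ ⟨q⟩`, the sum of the character idempotents over the `q`-cyclotomic coset of `1` descends
from a splitting field to a nonzero idempotent `e ∈ FH` with `e * ē = 0`. With `ε = 1 - e - ē` and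
`i ^ 2 = -1` (a square root of `-1` exists as `4 ∣ q - 1`), the code `{(εx + ey, iεx + ez)}` is
self-dual and contains `(e, 0)` but not `(0, ē)`.
-/

noncomputable section

variable {F : Type*} [Field F] [Fintype F] {n : ℕ} [NeZero n]

open MonoidAlgebra

section BarAlgEquiv

variable (k G : Type*) [CommSemiring k] [CommGroup G]

def barAlgEquiv : MonoidAlgebra k G ≃ₐ[k] MonoidAlgebra k G :=
  domCongr k k (MulEquiv.inv G)

variable {k G}

@[simp]
theorem coeff_barAlgEquiv (a : MonoidAlgebra k G) (g : G) :
    (barAlgEquiv k G a).coeff g = a.coeff g⁻¹ := by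
  simp [barAlgEquiv]

theorem sum_coeff_mul_coeff_eq_coeff_one [Fintype G] (a b : MonoidAlgebra k G) :
    ∑ g, a.coeff g * b.coeff g = (a * barAlgEquiv k G b).coeff 1 := by
  classical
  rw [coeff_mul_apply_left, Finsupp.sum_fintype _ _ (by simp)]
  simp

theorem eq_zero_of_forall_coeff_one_mul_eq_zero {w : MonoidAlgebra k G}
    (h : ∀ r, (r * w).coeff 1 = 0) : w = 0 := by
  ext g
  simpa using h (single g⁻¹ 1)

end BarAlgEquiv

section FiniteField

variable {F : Type*} [Field F] [Fintype F]

theorem natCast_ne_zero_of_coprime_card {n : ℕ} (hcop : Nat.Coprime (Fintype.card F) n) :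
    (n : F) ≠ 0 := by
  have h := (Nat.isCoprime_iff_coprime.mpr hcop).map (Int.castRingHom F)
  simp only [eq_intCast, Int.cast_natCast, FiniteField.cast_card_eq_zero, isCoprime_zero_left] at h
  exact h.ne_zero

theorem pow_card_pow_eq_barAlgEquiv {G : Type*} [CommGroup G] {k : ℕ}
    (hk : ∀ g : G, g ^ (Fintype.card F ^ k) = g⁻¹) (a : MonoidAlgebra F G) :
    a ^ (Fintype.card F ^ k) = barAlgEquiv F G a := by
  obtain ⟨s, hp, hcard⟩ := FiniteField.card F (ringChar F)
  have : Fact (ringChar F).Prime := ⟨hp⟩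
  have : CharP (MonoidAlgebra F G) (ringChar F) :=
    charP_of_injective_algebraMap (algebraMap F _).injective _
  rw [hcard, ← pow_mul]
  induction a using MonoidAlgebra.induction_linear with
  | zero => simp [hp.ne_zero]
  | add a b ha hb => rw [add_pow_char_pow, ha, hb, map_add]
  | single g r =>
    rw [single_pow, pow_mul, ← hcard, hk, FiniteField.pow_card_pow]
    simp [barAlgEquiv]

variable {K : Type*} [Field K] [Algebra F K]

open Polynomial in
theorem mem_range_algebraMap_of_pow_card_eq {x : K} (hx : x ^ Fintype.card F = x) :
    x ∈ Set.range (algebraMap F K) := by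
  classical
  have hq := Fintype.one_lt_card (α := F)
  have hroots : (X ^ Fintype.card F - X : F[X]).roots.map (algebraMap F K) =
      ((X ^ Fintype.card F - X : F[X]).map (algebraMap F K)).roots :=
    roots_map_of_injective_of_card_eq_natDegree (algebraMap F K).injective
      (by rw [FiniteField.roots_X_pow_card_sub_X,
        FiniteField.X_pow_card_sub_X_natDegree_eq F hq]; rfl)
  have hx' : x ∈ ((X ^ Fintype.card F - X : F[X]).map (algebraMap F K)).roots := by
    rw [mem_roots (Polynomial.map_ne_zero (FiniteField.X_pow_card_sub_X_ne_zero F hq))]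
    simp [hx]
  rw [← hroots, FiniteField.roots_X_pow_card_sub_X, Multiset.mem_map] at hx'
  obtain ⟨y, -, hy⟩ := hx'
  exact ⟨y, hy⟩

theorem exists_mapAlgHom_eq_of_coeff_pow_card {G : Type*} [Monoid G] (x : MonoidAlgebra K G)
    (hx : ∀ g, x.coeff g ^ Fintype.card F = x.coeff g) :
    ∃ y : MonoidAlgebra F G, mapAlgHom G (Algebra.ofId F K) y = x := by
  have hx' : x ∈ Set.range (map (M := G) (algebraMap F K : F →+ K)) := by
    rw [range_map]
    exact fun g => mem_range_algebraMap_of_pow_card_eq (hx g)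
  obtain ⟨y, rfl⟩ := hx'
  exact ⟨y, rfl⟩

end FiniteField

section MapAlgHom

variable {F K G : Type*} [Field F] [Field K] [Algebra F K]

theorem mapAlgHom_injective [Monoid G] : Function.Injective (mapAlgHom G (Algebra.ofId F K)) :=
  map_injective _ (algebraMap F K).injective

theorem mapAlgHom_barAlgEquiv [CommGroup G] (a : MonoidAlgebra F G) :
    mapAlgHom G (Algebra.ofId F K) (barAlgEquiv F G a) =
      barAlgEquiv K G (mapAlgHom G (Algebra.ofId F K) a) := by
  ext g; simp

end MapAlgHom

section CharacterIdempotent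

variable {R K : Type*} [CommRing R] [Fintype R] [Field K]

def charIdempotent (ψ : AddChar R K) (s : R) : MonoidAlgebra K (Multiplicative R) :=
  ∑ x : R, single (Multiplicative.ofAdd x) ((Fintype.card R : K)⁻¹ * ψ (-(s * x)))

theorem coeff_charIdempotent (ψ : AddChar R K) (s : R) (g : Multiplicative R) :
    (charIdempotent ψ s).coeff g = (Fintype.card R : K)⁻¹ * ψ (-(s * g.toAdd)) := by
  classical
  obtain ⟨x, rfl⟩ : ∃ x : R, Multiplicative.ofAdd x = g := ⟨g.toAdd, rfl⟩
  simp [charIdempotent, coeff_sum, Finsupp.single_apply]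

theorem single_mul_charIdempotent (ψ : AddChar R K) (s : R) (g : Multiplicative R) :
    single g 1 * charIdempotent ψ s = ψ (s * g.toAdd) • charIdempotent ψ s := by
  ext h
  simp only [coeff_single_mul_apply, coeff_smul, coeff_charIdempotent, toAdd_mul, toAdd_inv,
    one_mul, smul_eq_mul, Finsupp.smul_apply]
  rw [show -(s * (-g.toAdd + h.toAdd)) = s * g.toAdd + -(s * h.toAdd) by ring,
    AddChar.map_add_eq_mul]
  ring

theorem charIdempotent_mul [DecidableEq R] [NeZero (Fintype.card R : K)] {ψ : AddChar R K}
    (hψ : ψ.IsPrimitive) (s t : R) :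
    charIdempotent ψ s * charIdempotent ψ t = if s = t then charIdempotent ψ s else 0 := by
  have hsum : charIdempotent ψ s * charIdempotent ψ t =
      ((Fintype.card R : K)⁻¹ * ∑ x : R, ψ (x * (t - s))) • charIdempotent ψ t := by
    rw [charIdempotent, Finset.sum_mul, Finset.mul_sum, Finset.sum_smul]
    refine Finset.sum_congr rfl fun x _ => ?_
    rw [← mul_one ((Fintype.card R : K)⁻¹ * _), ← smul_single', smul_mul_assoc,
      single_mul_charIdempotent, smul_smul, show x * (t - s) = -(s * x) + t * x by ring,
      AddChar.map_add_eq_mul]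
    simp only [toAdd_ofAdd]
    ring_nf
  rw [hsum, AddChar.sum_mulShift _ hψ]
  by_cases h : s = t
  · subst h; simp [inv_mul_cancel₀ (NeZero.ne _)]
  · simp [sub_eq_zero, Ne.symm h, h]

theorem barAlgEquiv_charIdempotent (ψ : AddChar R K) (s : R) :
    barAlgEquiv K _ (charIdempotent ψ s) = charIdempotent ψ (-s) := by
  ext g
  simp only [coeff_barAlgEquiv, coeff_charIdempotent, toAdd_inv, mul_neg, neg_mul]

theorem charIdempotent_ne_zero [NeZero (Fintype.card R : K)] (ψ : AddChar R K) (s : R) :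
    charIdempotent ψ s ≠ 0 := by
  intro h
  exact NeZero.ne (Fintype.card R : K)
    (by simpa [coeff_charIdempotent] using congrArg (fun x => x.coeff 1) h)

theorem coeff_charIdempotent_pow_card {F : Type*} [Field F] [Fintype F] [Algebra F K]
    (ψ : AddChar R K) (s : R) (g : Multiplicative R) :
    (charIdempotent ψ s).coeff g ^ Fintype.card F =
      (charIdempotent ψ (Fintype.card F * s)).coeff g := by
  have hN : ((Fintype.card R : K)⁻¹) ^ Fintype.card F = (Fintype.card R : K)⁻¹ := by
    rw [← map_natCast (algebraMap F K), ← map_inv₀, ← map_pow, FiniteField.pow_card]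
  rw [coeff_charIdempotent, coeff_charIdempotent, mul_pow, hN, ← AddChar.map_nsmul_eq_pow,
    nsmul_eq_mul]
  congr 2
  ring

theorem coeff_sum_charIdempotent_pow_card {F : Type*} [Field F] [Fintype F] [Algebra F K]
    (ψ : AddChar R K) {D : Finset R} {u : Rˣ} (hu : (Fintype.card F : R) = u)
    (hD : ∀ s, (u : R) * s ∈ D ↔ s ∈ D) (g : Multiplicative R) :
    (∑ s ∈ D, charIdempotent ψ s).coeff g ^ Fintype.card F =
      (∑ s ∈ D, charIdempotent ψ s).coeff g := by
  simp only [coeff_sum, Finset.sum_apply']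
  rw [← FiniteField.frobeniusAlgHom_apply F K, map_sum]
  simp only [FiniteField.frobeniusAlgHom_apply, coeff_charIdempotent_pow_card, hu]
  exact Finset.sum_equiv u.mulLeft (fun s => (hD s).symm) fun _ _ => rfl

variable [NeZero (Fintype.card R : K)] {ψ : AddChar R K}

theorem isIdempotentElem_sum_charIdempotent (hψ : ψ.IsPrimitive) (D : Finset R) :
    IsIdempotentElem (∑ s ∈ D, charIdempotent ψ s) := by
  classical
  simp only [IsIdempotentElem, Finset.sum_mul_sum, charIdempotent_mul hψ, Finset.sum_ite_eq]
  exact Finset.sum_congr rfl fun s hs => if_pos hs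

theorem sum_charIdempotent_mul_bar_eq_zero (hψ : ψ.IsPrimitive) {D : Finset R}
    (hD : ∀ s ∈ D, -s ∉ D) :
    (∑ s ∈ D, charIdempotent ψ s) * barAlgEquiv K _ (∑ s ∈ D, charIdempotent ψ s) = 0 := by
  classical
  simp only [map_sum, barAlgEquiv_charIdempotent, Finset.sum_mul_sum, charIdempotent_mul hψ]
  refine Finset.sum_eq_zero fun s hs => Finset.sum_eq_zero fun t ht => ?_
  rw [if_neg]
  rintro rfl
  exact hD t ht hs

theorem sum_charIdempotent_ne_zero (hψ : ψ.IsPrimitive) {D : Finset R} {s : R} (hs : s ∈ D) :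
    ∑ s ∈ D, charIdempotent ψ s ≠ 0 := by
  classical
  intro h
  apply charIdempotent_ne_zero ψ s
  simpa [Finset.sum_mul, charIdempotent_mul hψ, hs] using congrArg (· * charIdempotent ψ s) h

theorem exists_isIdempotentElem_mul_barAlgEquiv_eq_zero {F : Type*} [Field F] [Fintype F]
    [Algebra F K] (hψ : ψ.IsPrimitive) {S : Subgroup Rˣ} {u : Rˣ}
    (hu : (Fintype.card F : R) = u) (huS : u ∈ S) (hS : -1 ∉ S) :
    ∃ E : MonoidAlgebra K (Multiplicative R), IsIdempotentElem E ∧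
      E * barAlgEquiv K _ E = 0 ∧ E ≠ 0 ∧ ∀ g, E.coeff g ^ Fintype.card F = E.coeff g := by
  classical
  let D : Finset R := Finset.univ.filter fun s => ∃ v ∈ S, (v : R) = s
  have hD (s : R) : s ∈ D ↔ ∃ v ∈ S, (v : R) = s := by simp [D]
  refine ⟨∑ s ∈ D, charIdempotent ψ s, isIdempotentElem_sum_charIdempotent hψ D,
    sum_charIdempotent_mul_bar_eq_zero hψ ?_, sum_charIdempotent_ne_zero hψ (s := 1) ?_,
    coeff_sum_charIdempotent_pow_card ψ hu fun s => ?_⟩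
  · simp only [hD]
    rintro _ ⟨v, hv, rfl⟩ ⟨w, hw, hwv⟩
    refine hS ?_
    have : w = -v := Units.ext (by simpa using hwv)
    simpa [this] using S.mul_mem hw (S.inv_mem hv)
  · exact (hD 1).mpr ⟨1, S.one_mem, rfl⟩
  · simp only [hD]
    constructor
    · rintro ⟨v, hv, hvs⟩
      exact ⟨u⁻¹ * v, S.mul_mem (S.inv_mem huS) hv, by simp [hvs]⟩
    · rintro ⟨v, hv, rfl⟩
      exact ⟨u * v, S.mul_mem huS hv, rfl⟩

end CharacterIdempotent

section HermitianForm

variable {F : Type*} [Field F] {n : ℕ}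

theorem bar_eq_barAlgEquiv (a : FH F n) : bar a = barAlgEquiv F (Zn n) a := by
  ext g; simp [bar]

@[simp] theorem bar_bar (a : FH F n) : bar (bar a) = a := by
  ext g; simp [bar_eq_barAlgEquiv]

@[simp] theorem bar_zero : bar (0 : FH F n) = 0 := by simp [bar_eq_barAlgEquiv]

@[simp] theorem bar_one : bar (1 : FH F n) = 1 := by simp [bar_eq_barAlgEquiv]

@[simp] theorem bar_sub (a b : FH F n) : bar (a - b) = bar a - bar b := by
  simp [bar_eq_barAlgEquiv]

@[simp] theorem bar_mul (a b : FH F n) : bar (a * b) = bar a * bar b := by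
  simp [bar_eq_barAlgEquiv]

@[simp] theorem bar_algebraMap (r : F) : bar (algebraMap F (FH F n) r) = algebraMap F _ r := by
  rw [bar_eq_barAlgEquiv, AlgEquiv.commutes]

theorem pow_eq_inv_of_natCast_pow_eq_neg_one {q k : ℕ} (h : (q : ZMod n) ^ k = -1) (g : Zn n) :
    g ^ (q ^ k) = g⁻¹ := by
  change Multiplicative.ofAdd ((q ^ k) • g.toAdd) = Multiplicative.ofAdd (-g.toAdd)
  rw [nsmul_eq_mul, Nat.cast_pow, h, neg_one_mul]

def hermFH2 (u v : FH F n × FH F n) : FH F n := u.1 * bar v.1 + u.2 * bar v.2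

theorem hermFH2_smul_right (u v : FH F n × FH F n) (a : FH F n) :
    hermFH2 u (a • v) = bar a * hermFH2 u v := by
  simp only [hermFH2, Prod.smul_fst, Prod.smul_snd, smul_eq_mul, bar_mul]
  ring

theorem innerFH2_eq_coeff_hermFH2 [NeZero n] (u v : FH F n × FH F n) :
    innerFH2 u v = (hermFH2 u v).coeff 1 := by
  simp only [innerFH2, innerFH, hermFH2, bar_eq_barAlgEquiv, coeff_add,
    sum_coeff_mul_coeff_eq_coeff_one, Finsupp.add_apply]

theorem forall_innerFH2_eq_zero_iff [NeZero n] {C : Submodule (FH F n) (FH F n × FH F n)}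
    {u : FH F n × FH F n} : (∀ c ∈ C, innerFH2 u c = 0) ↔ ∀ c ∈ C, hermFH2 u c = 0 := by
  refine ⟨fun h c hc => eq_zero_of_forall_coeff_one_mul_eq_zero fun r => ?_,
    fun h c hc => by simp [innerFH2_eq_coeff_hermFH2, h c hc]⟩
  rw [← bar_bar r, ← hermFH2_smul_right, ← innerFH2_eq_coeff_hermFH2]
  exact h _ (C.smul_mem _ hc)

theorem isSelfDual_iff [NeZero n] {C : Submodule (FH F n) (FH F n × FH F n)} :
    IsSelfDual C ↔ ∀ u, u ∈ C ↔ ∀ c ∈ C, hermFH2 u c = 0 := by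
  simp only [IsSelfDual, Set.ext_iff, SetLike.mem_coe, Set.mem_ofPred_eq,
    forall_innerFH2_eq_zero_iff]

theorem cross_mul_bar_cross (u v : FH F n × FH F n) :
    (u.1 * v.2 - u.2 * v.1) * bar (u.1 * v.2 - u.2 * v.1) =
      hermFH2 u u * hermFH2 v v - hermFH2 u v * hermFH2 v u := by
  simp only [hermFH2, bar_sub, bar_mul]
  ring

end HermitianForm

section SelfDualIsConstaDihedral

variable {F : Type*} [Field F] [Fintype F] {n : ℕ} [NeZero n]

theorem isReduced_FH (hcop : Nat.Coprime (Fintype.card F) n) : IsReduced (FH F n) := by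
  have : NeZero (Nat.card (Zn n) : F) := ⟨by simpa using natCast_ne_zero_of_coprime_card hcop⟩
  infer_instance

theorem isConstaDihedral_of_isSelfDual (hcop : Nat.Coprime (Fintype.card F) n)
    (hneg : (-1 : (ZMod n)ˣ) ∈ Subgroup.zpowers (ZMod.unitOfCoprime (Fintype.card F) hcop))
    {C : Submodule (FH F n) (FH F n × FH F n)} (hC : IsSelfDual C) : IsConstaDihedral C := by
  obtain ⟨k, hk⟩ := (mem_powers_iff_mem_zpowers.mpr hneg : _ ∈ Submonoid.powers _)
  have hbar (a : FH F n) : bar a = a ^ (Fintype.card F ^ k) := by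
    rw [bar_eq_barAlgEquiv, pow_card_pow_eq_barAlgEquiv]
    refine pow_eq_inv_of_natCast_pow_eq_neg_one ?_
    simpa [Units.ext_iff] using hk
  rw [isSelfDual_iff] at hC
  have horth : ∀ u ∈ C, ∀ v ∈ C, hermFH2 u v = 0 := fun u hu => (hC u).mp hu
  have hcross : ∀ u ∈ C, ∀ v ∈ C, u.1 * v.2 - u.2 * v.1 = 0 := by
    intro u hu v hv
    have := isReduced_FH hcop
    refine IsReduced.eq_zero _ ⟨Fintype.card F ^ k + 1, ?_⟩
    rw [pow_succ', ← hbar, cross_mul_bar_cross, horth u hu u hu, horth u hu v hv]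
    ring
  intro u hu
  refine (hC _).mpr fun v hv => ?_
  have : hermFH2 (-bar u.2, bar u.1) v = bar (u.1 * v.2 - u.2 * v.1) := by
    simp only [hermFH2, bar_sub, bar_mul]
    ring
  rw [this, hcross u hu v hv, bar_zero]

end SelfDualIsConstaDihedral

section CyclotomicCosetIdempotent

variable {F : Type*} [Field F] [Fintype F] {n : ℕ} [NeZero n]

theorem exists_isIdempotentElem_mul_bar_eq_zero (hcop : Nat.Coprime (Fintype.card F) n)
    (hneg : (-1 : (ZMod n)ˣ) ∉ Subgroup.zpowers (ZMod.unitOfCoprime (Fintype.card F) hcop)) :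
    ∃ e : FH F n, IsIdempotentElem e ∧ e * bar e = 0 ∧ e ≠ 0 := by
  have : NeZero (n : F) := ⟨natCast_ne_zero_of_coprime_card hcop⟩
  let K := CyclotomicField n F
  have hζ := IsCyclotomicExtension.zeta_spec n F K
  have : NeZero (Fintype.card (ZMod n) : K) := by simpa using hζ.neZero'
  obtain ⟨E, hE, hEbar, hE0, hEq⟩ := exists_isIdempotentElem_mul_barAlgEquiv_eq_zero (F := F)
    (AddChar.zmodChar_primitive_of_primitive_root n hζ) (ZMod.coe_unitOfCoprime _ hcop).symm
    (Subgroup.mem_zpowers _) hneg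
  obtain ⟨e, rfl⟩ := exists_mapAlgHom_eq_of_coeff_pow_card E hEq
  have hinj := mapAlgHom_injective (F := F) (K := K) (G := Zn n)
  refine ⟨e, hinj ?_, hinj ?_, fun h => hE0 (by simp [h])⟩
  · rw [map_mul, hE.eq]
  · rw [map_mul, bar_eq_barAlgEquiv, mapAlgHom_barAlgEquiv, hEbar, map_zero]

end CyclotomicCosetIdempotent

section TwistedCode

variable {F : Type*} [Field F] {n : ℕ}

/-- With `ε = 1 - e - ē`, this is `{(εx + ey, Iεx + ez)}`: the graph of multiplication by `I` on
`ε • FH`, plus `e • FH × e • FH`. -/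
def twistedCode (e I : FH F n) : Submodule (FH F n) (FH F n × FH F n) where
  carrier := {v | bar e * v.1 = 0 ∧ bar e * v.2 = 0 ∧ (1 - e - bar e) * (v.2 - I * v.1) = 0}
  add_mem' := by
    rintro a b ⟨ha₁, ha₂, ha₃⟩ ⟨hb₁, hb₂, hb₃⟩
    refine ⟨?_, ?_, ?_⟩ <;> simp only [Prod.fst_add, Prod.snd_add]
    · linear_combination ha₁ + hb₁
    · linear_combination ha₂ + hb₂
    · linear_combination ha₃ + hb₃
  zero_mem' := by simp
  smul_mem' := by
    rintro c v ⟨h₁, h₂, h₃⟩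
    refine ⟨?_, ?_, ?_⟩ <;> simp only [Prod.smul_fst, Prod.smul_snd, smul_eq_mul]
    · linear_combination c * h₁
    · linear_combination c * h₂
    · linear_combination c * h₃

variable {e : FH F n}

theorem bar_mul_bar_self (he : IsIdempotentElem e) : bar e * bar e = bar e := by
  rw [← bar_mul, he.eq]

theorem one_sub_sub_bar_mul_self (he : IsIdempotentElem e) (hebar : e * bar e = 0) :
    (1 - e - bar e) * e = 0 := by
  linear_combination -he.eq - hebar

theorem one_sub_sub_bar_mul_bar (he : IsIdempotentElem e) (hebar : e * bar e = 0) :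
    (1 - e - bar e) * bar e = 0 := by
  linear_combination -bar_mul_bar_self he - hebar

theorem mk_self_zero_mem_twistedCode (he : IsIdempotentElem e) (hebar : e * bar e = 0)
    (I : FH F n) : (e, 0) ∈ twistedCode e I := by
  refine ⟨by rw [mul_comm, hebar], mul_zero _, ?_⟩
  linear_combination -I * one_sub_sub_bar_mul_self he hebar

theorem isSelfDual_twistedCode [NeZero n] (he : IsIdempotentElem e) (hebar : e * bar e = 0)
    {I : FH F n} (hI : I * I = -1) (hbarI : bar I = I) : IsSelfDual (twistedCode e I) := by
  have hbe := bar_mul_bar_self he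
  have hPe := one_sub_sub_bar_mul_self he hebar
  have hPb := one_sub_sub_bar_mul_bar he hebar
  rw [isSelfDual_iff]
  intro u
  constructor
  · rintro ⟨a₁, a₂, a₃⟩ c ⟨b₁, b₂, b₃⟩
    have b₁' := congrArg bar b₁
    have b₂' := congrArg bar b₂
    have b₃' := congrArg bar b₃
    simp only [bar_mul, bar_sub, bar_one, bar_bar, bar_zero, hbarI] at b₁' b₂' b₃'
    simp only [hermFH2]
    set P := 1 - e - bar e
    set G := u.1 * bar c.1 + u.2 * bar c.2
    -- split `G` along `1 = P + e + ē`; the `P`-part dies because `I * I = -1`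
    linear_combination u.1 * b₁' + u.2 * b₂' + bar c.1 * a₁ + bar c.2 * a₂ - G * he.eq - G * hbe
      - 2 * G * hebar + P * u.2 * b₃' + I * P * bar c.1 * a₃ + P * u.1 * P * bar c.1 * hI
  · intro h
    set P := 1 - e - bar e
    have hbarP : bar P = P := by simp only [P, bar_sub, bar_one, bar_bar]; ring
    have h₁ := h (P, I * P) ⟨by linear_combination hPb, by linear_combination I * hPb, by ring⟩
    have h₂ := h (e, 0) (mk_self_zero_mem_twistedCode he hebar I)
    have h₃ := h (0, e) ⟨mul_zero _, by rw [mul_comm, hebar], by linear_combination hPe⟩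
    simp only [hermFH2, bar_mul, bar_zero, hbarI, hbarP] at h₁ h₂ h₃
    refine ⟨by linear_combination h₂, by linear_combination h₃, ?_⟩
    linear_combination -I * h₁ + P * u.2 * hI

theorem not_isConstaDihedral_twistedCode (he : IsIdempotentElem e) (hebar : e * bar e = 0)
    (he0 : e ≠ 0) (I : FH F n) : ¬ IsConstaDihedral (twistedCode e I) := by
  intro hC
  obtain ⟨-, hbe, -⟩ := hC _ (mk_self_zero_mem_twistedCode he hebar I)
  apply he0
  rw [← bar_bar e, ← bar_mul_bar_self he, hbe, bar_zero]

end TwistedCode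

theorem all_self_dual_consta_dihedral_iff_odd_char_general (F : Type*) [Field F] [Fintype F]
    (n : ℕ) [NeZero n]
    (hcop : Nat.Coprime (Fintype.card F) n) (hq : 4 ∣ Fintype.card F - 1) :
    (∀ C : Submodule (FH F n) (FH F n × FH F n), IsSelfDual C → IsConstaDihedral C) ↔
      (-1 : (ZMod n)ˣ) ∈ Subgroup.zpowers (ZMod.unitOfCoprime (Fintype.card F) hcop) := by
  refine ⟨fun h => ?_, fun hneg C hC => isConstaDihedral_of_isSelfDual hcop hneg hC⟩
  by_contra hneg
  obtain ⟨e, he, hebar, he0⟩ := exists_isIdempotentElem_mul_bar_eq_zero hcop hneg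
  obtain ⟨i, hi⟩ : IsSquare (-1 : F) := FiniteField.isSquare_neg_one_iff.mpr (by
    have := Fintype.one_lt_card (α := F); omega)
  let I := algebraMap F (FH F n) i
  have hI : I * I = -1 := by rw [← map_mul, ← hi, map_neg, map_one]
  exact not_isConstaDihedral_twistedCode he hebar he0 I
    (h _ (isSelfDual_twistedCode he hebar hI (bar_algebraMap i)))

/-- (char F odd, `4 ∣ q − 1`, so self-dual 2-quasi-cyclic codes exist.) Every
self-dual 2-quasi-cyclic code of length `2n` over `F` is a consta-dihedral code iff
`−1` belongs to the cyclic subgroup of `(ℤ/nℤ)ˣ` generated by `q = |F|`. -/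
theorem all_self_dual_consta_dihedral_iff_odd_char (F : Type*) [Field F] [Fintype F]
    (n : ℕ) [NeZero n]
    (hn : 1 < n) (hcop : Nat.Coprime (Fintype.card F) n)
    (hchar : ringChar F ≠ 2) (hq : 4 ∣ Fintype.card F - 1) :
    (∀ C : Submodule (FH F n) (FH F n × FH F n), IsSelfDual C → IsConstaDihedral C) ↔
      (-1 : (ZMod n)ˣ) ∈ Subgroup.zpowers (ZMod.unitOfCoprime (Fintype.card F) hcop) :=
  all_self_dual_consta_dihedral_iff_odd_char_general F n hcop hq
end
end
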